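/- For Ω ≠ 0, p ∈ (2,3), r ∈ (6/5,2), θ with 1/θ < 1/2 - (3/2)(1/r - 1/p), and ℓ defined by 1/θ = 1/ℓ + 2/θ - 1, the function h(t) = (log(e + |Ω| t)/(1 + |Ω| t))^{(1/2)(1-2/p)} · t^{-(1/2) - (3/2)(1/r - 1/p)} on (0,∞) satisfies ‖h‖_{L^ℓ(0,∞)} = C |Ω|^{1/θ - 1/2 + (3/2)(1/r - 1/p)} for some constant C = C(p,r,θ) > 0 independent of Ω. In particular, h ∈ L^ℓ(0,∞). -/

import Mathlib

noncomputable section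

open MeasureTheory Real Filter
open scoped ENNReal FourierTransform Topology

/-- Physical/frequency space `ℝ³`. -/
abbrev V3 : Type := EuclideanSpace ℝ (Fin 3)

/-- Complex vector fields on `ℝ³`. -/
abbrev VF : Type := V3 → Fin 3 → ℂ

/-- `ℓ^q(ℤ)` norm of a sequence of extended nonnegative reals. -/
def lqNorm (q : ℝ≥0∞) (a : ℤ → ℝ≥0∞) : ℝ≥0∞ :=
  if q = ∞ then ⨆ j, a j else (∑' j, a j ^ q.toReal) ^ (1 / q.toReal)

/-- `L^θ(0,∞)` norm of an `ℝ≥0∞`-valued function of time. -/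
def timeNorm (θ : ℝ≥0∞) (g : ℝ → ℝ≥0∞) : ℝ≥0∞ :=
  if θ = ∞ then essSup g (volume.restrict (Set.Ioi (0 : ℝ)))
  else (∫⁻ t in Set.Ioi (0 : ℝ), g t ^ θ.toReal) ^ (1 / θ.toReal)

/-- Littlewood–Paley block `Δ_j f`, defined through the Fourier transform and a
bump function `φhat` in frequency space. -/
def LPblock {F : Type} [NormedAddCommGroup F] [NormedSpace ℂ F]
    (φhat : V3 → ℂ) (j : ℤ) (f : V3 → F) : V3 → F :=
  𝓕⁻ fun ξ => φhat ((2 : ℝ) ^ (-j) • ξ) • 𝓕 f ξ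

/-- `φhat` generates a homogeneous Littlewood–Paley decomposition:
it is a smooth `[0,1]`-valued bump supported in the annulus `1/2 ≤ |ξ| ≤ 2` whose
dyadic dilates form a partition of unity away from the origin. -/
structure IsLPFamily (φhat : V3 → ℂ) : Prop where
  smooth : ContDiff ℝ (⊤ : ℕ∞) φhat
  real01 : ∀ ξ, ∃ r : ℝ, 0 ≤ r ∧ r ≤ 1 ∧ φhat ξ = r
  supp : ∀ ξ, φhat ξ ≠ 0 → (1 : ℝ) / 2 ≤ ‖ξ‖ ∧ ‖ξ‖ ≤ 2
  sum_one : ∀ ξ : V3, ξ ≠ 0 → ∑' j : ℤ, φhat ((2 : ℝ) ^ (-j) • ξ) = 1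

/-- Homogeneous Besov norm `‖f‖_{Ḃ^s_{p,q}}` associated with `φhat`. -/
def besovNorm {F : Type} [NormedAddCommGroup F] [NormedSpace ℂ F]
    (φhat : V3 → ℂ) (s : ℝ) (p q : ℝ≥0∞) (f : V3 → F) : ℝ≥0∞ :=
  lqNorm q fun j =>
    ENNReal.ofReal ((2 : ℝ) ^ (s * (j : ℝ))) * eLpNorm (LPblock φhat j f) p volume

/-- Heat semigroup `e^{tΔ}` as a Fourier multiplier. -/
def heatOp {F : Type} [NormedAddCommGroup F] [NormedSpace ℂ F]
    (t : ℝ) (f : V3 → F) : V3 → F :=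
  𝓕⁻ fun ξ => (Real.exp (-(t * ‖ξ‖ ^ 2)) : ℂ) • 𝓕 f ξ

/-- The skew-symmetric matrix symbol `ℛ(ξ)`. -/
def calR (ξ : V3) : Matrix (Fin 3) (Fin 3) ℝ :=
  (1 / ‖ξ‖) • Matrix.of ![![0, ξ 2, -(ξ 1)], ![-(ξ 2), 0, ξ 0], ![ξ 1, -(ξ 0), 0]]

/-- Action of the matrix `ℛ(ξ)` on a complex vector. -/
def calRApply (ξ : V3) (v : Fin 3 → ℂ) : Fin 3 → ℂ :=
  fun i => ∑ j, (calR ξ i j : ℂ) * v j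

/-- The Stokes–Coriolis semigroup `T_Ω(t)`, defined through its Fourier multiplier
`cos(Ωtξ₃/|ξ|)e^{-t|ξ|²} I + sin(Ωtξ₃/|ξ|)e^{-t|ξ|²} ℛ(ξ)`. -/
def coriolis (Ω t : ℝ) (f : VF) : VF :=
  𝓕⁻ fun ξ =>
    (Real.cos (Ω * t * (ξ 2) / ‖ξ‖) * Real.exp (-(t * ‖ξ‖ ^ 2)) : ℂ) • 𝓕 f ξ
      + (Real.sin (Ω * t * (ξ 2) / ‖ξ‖) * Real.exp (-(t * ‖ξ‖ ^ 2)) : ℂ) •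
          calRApply ξ (𝓕 f ξ)

/-- Divergence-free, expressed in frequency variables. -/
def DivFree (f : VF) : Prop := ∀ ξ : V3, ∑ i, ((ξ i : ℝ) : ℂ) * 𝓕 f ξ i = 0

/-- Leray–Helmholtz projector `ℙ`. -/
def leray (f : VF) : VF :=
  𝓕⁻ fun ξ i =>
    𝓕 f ξ i - ((ξ i : ℝ) : ℂ) * (∑ j, ((ξ j : ℝ) : ℂ) * 𝓕 f ξ j) / ((‖ξ‖ ^ 2 : ℝ) : ℂ)

/-- Gradient of a scalar function, as a Fourier multiplier. -/
def gradOp (f : V3 → ℂ) : VF :=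
  𝓕⁻ fun ξ i => (2 * Real.pi * Complex.I * ((ξ i : ℝ) : ℂ)) * 𝓕 f ξ

/-- Tensor product `u ⊗ v` of two vector fields. -/
def tensorProd (u v : VF) : V3 → Fin 3 → Fin 3 → ℂ := fun x i j => u x i * v x j

/-- Divergence `∇·F` of a matrix field, as a Fourier multiplier. -/
def divTensor (F : V3 → Fin 3 → Fin 3 → ℂ) : VF :=
  𝓕⁻ fun ξ i => ∑ j, (2 * Real.pi * Complex.I * ((ξ j : ℝ) : ℂ)) * 𝓕 F ξ i j

/-- Multi-index spatial derivative `∇_x^k`, as a Fourier multiplier. -/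
def derivMulti (k : Fin 3 → ℕ) (f : VF) : VF :=
  𝓕⁻ fun ξ => (∏ i, (2 * Real.pi * Complex.I * ((ξ i : ℝ) : ℂ)) ^ (k i)) • 𝓕 f ξ

/-- The oscillating operators `G_±(τ)` (with `ε = ±1`). -/
def Gop (ε τ : ℝ) (f : VF) : VF :=
  𝓕⁻ fun ξ => Complex.exp (Complex.I * (ε : ℂ) * (τ : ℂ) * (((ξ 2) / ‖ξ‖ : ℝ) : ℂ)) • 𝓕 f ξ

/-- The matrix `ℛ` of Riesz-transform operators (each `R_j` has symbol `-iξ_j/|ξ|`). -/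
def rieszMat (f : VF) : VF :=
  𝓕⁻ fun ξ => (-Complex.I) • calRApply ξ (𝓕 f ξ)

/-- Bilinear Duhamel operator `𝔅(u,v)(t) = ∫₀ᵗ T_Ω(t-τ) ℙ ∇·(u ⊗ v)(τ) dτ`. -/
def bilinB (Ω : ℝ) (u v : ℝ → VF) (t : ℝ) : VF := fun x =>
  ∫ τ in Set.Ioc (0 : ℝ) t, coriolis Ω (t - τ) (leray (divTensor (tensorProd (u τ) (v τ)))) x

/-- `u` is a global mild solution of the Navier–Stokes–Coriolis system with data `u₀`. -/
def IsMildSolution (Ω : ℝ) (u₀ : VF) (u : ℝ → VF) : Prop :=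
  ∀ t ≥ (0 : ℝ), u t = fun x i => coriolis Ω t u₀ x i - bilinB Ω u u t x i

/-- The `L⁴(0,∞; Ḃ^{1/2}_{3,q})` norm of a time dependent vector field. -/
def X4norm (φhat : V3 → ℂ) (q : ℝ≥0∞) (w : ℝ → VF) : ℝ≥0∞ :=
  timeNorm 4 fun t => besovNorm φhat (1 / 2) 3 q (w t)

/-- The norm of the space `𝓕`: `sup_{|Ω| ≥ Ω₀} ‖T_Ω(·)f‖_{L⁴(0,∞;Ḃ^{1/2}_{3,q})}`. -/
def FNorm (φhat : V3 → ℂ) (Ω₀ : ℝ) (q : ℝ≥0∞) (f : VF) : ℝ≥0∞ :=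
  ⨆ Ω : {Ω : ℝ // Ω₀ ≤ |Ω|}, X4norm φhat q fun t => coriolis Ω t f

/-- Membership in the class `𝓕₀`: finite `𝓕`-norm and vanishing Strichartz norm
in the fast rotation limit. -/
def MemF0 (φhat : V3 → ℂ) (Ω₀ : ℝ) (q : ℝ≥0∞) (f : VF) : Prop :=
  FNorm φhat Ω₀ q f < ∞ ∧
    Tendsto (fun Ω : ℝ => X4norm φhat q fun t => coriolis Ω t f)
      (Filter.comap (fun Ω : ℝ => |Ω|) atTop) (𝓝 0)

/-- Continuity in time with values in `Ḃ^s_{2,q}` on `[0,∞)`. -/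
def BesovContinuous (φhat : V3 → ℂ) (s : ℝ) (q : ℝ≥0∞) (u : ℝ → VF) : Prop :=
  ∀ t₀ ≥ (0 : ℝ),
    Tendsto (fun t => besovNorm φhat s 2 q fun x i => u t x i - u t₀ x i)
      (𝓝[Set.Ici (0 : ℝ)] t₀) (𝓝 0)

lemma my_lintegral_Ioi_comp_mul_left (F : ℝ → ℝ≥0∞) (hF : Measurable F) {c : ℝ} (hc : 0 < c) :
    ∫⁻ t in Set.Ioi (0:ℝ), F (c * t) = ENNReal.ofReal c⁻¹ * ∫⁻ s in Set.Ioi (0:ℝ), F s := by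
  have hmeas : Measurable fun t : ℝ => c * t := measurable_const_mul c
  have hpre : (fun t : ℝ => c * t) ⁻¹' Set.Ioi 0 = Set.Ioi 0 := by
    ext t
    simp [Set.mem_Ioi, mul_pos_iff_of_pos_left, hc]
  have h1 : ((volume : Measure ℝ).map (fun t : ℝ => c * t)).restrict (Set.Ioi 0)
      = ((volume : Measure ℝ).restrict (Set.Ioi 0)).map (fun t : ℝ => c * t) := by
    rw [Measure.restrict_map hmeas measurableSet_Ioi, hpre]
  have h2 : ((volume : Measure ℝ).map (fun t : ℝ => c * t))
      = ENNReal.ofReal |c⁻¹| • (volume : Measure ℝ) :=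
    Real.map_volume_mul_left (ne_of_gt hc)
  calc ∫⁻ t in Set.Ioi (0:ℝ), F (c * t)
      = ∫⁻ s, F s ∂(((volume : Measure ℝ).restrict (Set.Ioi 0)).map (fun t : ℝ => c * t)) := by
        rw [lintegral_map hF hmeas]
    _ = ∫⁻ s, F s ∂(((volume : Measure ℝ).map (fun t : ℝ => c * t)).restrict (Set.Ioi 0)) := by
        rw [h1]
    _ = ∫⁻ s, F s ∂((ENNReal.ofReal |c⁻¹| • (volume : Measure ℝ)).restrict (Set.Ioi 0)) := by
        rw [h2]
    _ = ENNReal.ofReal c⁻¹ * ∫⁻ s in Set.Ioi (0:ℝ), F s := by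
        rw [Measure.restrict_smul, lintegral_smul_measure, abs_of_pos (inv_pos.mpr hc), smul_eq_mul]

lemma my_log_add_le {t : ℝ} (ht : 0 ≤ t) : Real.log (Real.exp 1 + t) ≤ 1 + t := by
  have h1 : (0:ℝ) < Real.exp 1 + t := by positivity
  rw [Real.log_le_iff_le_exp h1, Real.exp_add]
  nlinarith [Real.add_one_le_exp t, Real.add_one_le_exp (1:ℝ), Real.exp_pos t,
    Real.exp_pos (1:ℝ)]

set_option maxHeartbeats 1000000 in
/-- exact `L^ℓ(0,∞)` norm of
`h(t) = (log(e+|Ω|t)/(1+|Ω|t))^{(1/2)(1-2/p)} t^{-1/2-(3/2)(1/r-1/p)}`: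
it equals `C |Ω|^{1/θ-1/2+(3/2)(1/r-1/p)}` with `C` independent of `Ω`;
in particular `h ∈ L^ℓ(0,∞)`. -/
theorem stmt1 (p r θ ℓ : ℝ) (hp : 2 < p) (hp3 : p < 3) (hr : 6 / 5 < r) (hr2 : r < 2)
    (hθ1 : max 0 (1 / 2 - (3 / 2) * (1 / r - 1 / p) - (1 / 2) * (1 - 2 / p)) < 1 / θ)
    (hθ2 : 1 / θ < 1 / 2 - (3 / 2) * (1 / r - 1 / p))
    (hℓdef : 1 / θ = 1 / ℓ + 2 / θ - 1) (hℓ1 : 1 ≤ ℓ) :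
    ∃ C : ℝ, 0 < C ∧ ∀ Ω : ℝ, Ω ≠ 0 →
      (∫⁻ t in Set.Ioi (0 : ℝ),
          (ENNReal.ofReal
            ((Real.log (Real.exp 1 + |Ω| * t) / (1 + |Ω| * t)) ^ ((1 / 2) * (1 - 2 / p))
              * t ^ (-(1 / 2) - (3 / 2) * (1 / r - 1 / p)))) ^ ℓ) ^ (1 / ℓ)
        = ENNReal.ofReal (C * |Ω| ^ (1 / θ - 1 / 2 + (3 / 2) * (1 / r - 1 / p))) ∧
      (∫⁻ t in Set.Ioi (0 : ℝ),
          (ENNReal.ofReal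
            ((Real.log (Real.exp 1 + |Ω| * t) / (1 + |Ω| * t)) ^ ((1 / 2) * (1 - 2 / p))
              * t ^ (-(1 / 2) - (3 / 2) * (1 / r - 1 / p)))) ^ ℓ) ^ (1 / ℓ) < ∞ := by
  have hp0 : (0:ℝ) < p := by linarith
  have hr0 : (0:ℝ) < r := by linarith
  set b : ℝ := (1 / 2) * (1 - 2 / p) with hb_def
  set a : ℝ := -(1 / 2) - (3 / 2) * (1 / r - 1 / p) with ha_def
  clear_value b a
  have hℓpos : (0:ℝ) < ℓ := by linarith
  have hℓne : ℓ ≠ 0 := ne_of_gt hℓpos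
  have hb : 0 < b := by
    have h2p : 2 / p < 1 := (div_lt_one hp0).mpr hp
    rw [hb_def]; linarith
  have hrp : 1 / p < 1 / r := one_div_lt_one_div_of_lt hr0 (by linarith)
  have ha_neg : a < 0 := by rw [ha_def]; nlinarith
  have hθ1' : 1 + a - b < 1 / θ := by
    have := lt_of_le_of_lt (le_max_right _ _) hθ1
    rw [ha_def, hb_def]; linarith
  have hθ2' : 1 / θ < 1 + a := by rw [ha_def]; linarith
  have hinvℓ : 1 / ℓ = 1 - 1 / θ := by
    have h2θ : 2 / θ = 2 * (1 / θ) := by ring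
    linarith
  have haℓ : -1 < a * ℓ := by
    have h1 : -(1 / ℓ) < a := by linarith
    have h2 := mul_lt_mul_of_pos_right h1 hℓpos
    have h3 : -(1 / ℓ) * ℓ = -1 := by field_simp
    rw [h3] at h2; exact h2
  have habℓ : (a - b) * ℓ < -1 := by
    have h1 : a - b < -(1 / ℓ) := by linarith
    have h2 := mul_lt_mul_of_pos_right h1 hℓpos
    have h3 : -(1 / ℓ) * ℓ = -1 := by field_simp
    rw [h3] at h2; exact h2
  -- the scaled profile
  set g : ℝ → ℝ := fun s => (Real.log (Real.exp 1 + s) / (1 + s)) ^ b * s ^ a with hg_def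
  have hg_app : ∀ s : ℝ, g s = (Real.log (Real.exp 1 + s) / (1 + s)) ^ b * s ^ a :=
    fun s => rfl
  have hg_meas : Measurable g := by
    have h1 : Measurable fun s : ℝ => Real.log (Real.exp 1 + s) / (1 + s) :=
      (Real.measurable_log.comp (measurable_const.add measurable_id)).div
        (measurable_const.add measurable_id)
    exact (h1.pow measurable_const).mul (measurable_id.pow measurable_const)
  set F : ℝ → ℝ≥0∞ := fun s => (ENNReal.ofReal (g s)) ^ ℓ with hF_def
  have hF_app : ∀ s : ℝ, F s = (ENNReal.ofReal (g s)) ^ ℓ := fun s => rfl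
  have hF_meas : Measurable F :=
    (ENNReal.measurable_ofReal.comp hg_meas).pow measurable_const
  set J : ℝ≥0∞ := ∫⁻ s in Set.Ioi (0:ℝ), F s with hJ_def
  -- nonnegativity of the profile on (0, ∞)
  have hlog_nonneg : ∀ s : ℝ, 0 < s → 0 ≤ Real.log (Real.exp 1 + s) / (1 + s) := by
    intro s hs
    apply div_nonneg _ (by linarith)
    apply Real.log_nonneg
    nlinarith [Real.add_one_le_exp (1:ℝ)]
  have hg_nonneg : ∀ s : ℝ, 0 < s → 0 ≤ g s := by
    intro s hs
    rw [hg_app]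
    exact mul_nonneg (Real.rpow_nonneg (hlog_nonneg s hs) b) (Real.rpow_nonneg hs.le a)
  -- ratio ≤ 1
  have hratio_le_one : ∀ s : ℝ, 0 < s → Real.log (Real.exp 1 + s) / (1 + s) ≤ 1 := by
    intro s hs
    rw [div_le_one (by linarith)]
    exact my_log_add_le hs.le
  -- finiteness of J
  have hJ_fin : J < ∞ := by
    have hsplit : Set.Ioi (0:ℝ) = Set.Ioc 0 1 ∪ Set.Ioi 1 :=
      (Set.Ioc_union_Ioi_eq_Ioi (zero_le_one)).symm
    have hdis : Disjoint (Set.Ioc (0:ℝ) 1) (Set.Ioi 1) := Set.Ioc_disjoint_Ioi le_rfl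
    rw [hJ_def, hsplit, lintegral_union measurableSet_Ioi hdis]
    have hA : ∫⁻ s in Set.Ioc (0:ℝ) 1, F s < ∞ := by
      have hbound : ∀ s ∈ Set.Ioc (0:ℝ) 1, F s ≤ ENNReal.ofReal (s ^ (a * ℓ)) := by
        intro s hs
        have hs0 : 0 < s := hs.1
        have h1 : g s ≤ s ^ a := by
          rw [hg_app]
          have := Real.rpow_le_one (hlog_nonneg s hs0) (hratio_le_one s hs0) hb.le
          calc (Real.log (Real.exp 1 + s) / (1 + s)) ^ b * s ^ a ≤ 1 * s ^ a :=
                mul_le_mul_of_nonneg_right this (Real.rpow_nonneg hs0.le a)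
            _ = s ^ a := one_mul _
        have h2 : g s ^ ℓ ≤ s ^ (a * ℓ) := by
          rw [Real.rpow_mul hs0.le]
          exact Real.rpow_le_rpow (hg_nonneg s hs0) h1 hℓpos.le
        calc F s = ENNReal.ofReal (g s ^ ℓ) := by
              rw [hF_app, ENNReal.ofReal_rpow_of_nonneg (hg_nonneg s hs0) hℓpos.le]
          _ ≤ ENNReal.ofReal (s ^ (a * ℓ)) := ENNReal.ofReal_le_ofReal h2
      calc ∫⁻ s in Set.Ioc (0:ℝ) 1, F s
          ≤ ∫⁻ s in Set.Ioc (0:ℝ) 1, ENNReal.ofReal (s ^ (a * ℓ)) :=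
            setLIntegral_mono' measurableSet_Ioc hbound
        _ < ∞ := by
            have hint : IntegrableOn (fun s : ℝ => s ^ (a * ℓ)) (Set.Ioc 0 1) := by
              have := intervalIntegral.intervalIntegrable_rpow' (a := 0) (b := 1)
                (r := a * ℓ) haℓ
              rw [intervalIntegrable_iff, Set.uIoc_of_le zero_le_one] at this
              exact this
            exact hint.lintegral_lt_top
    have hB : ∫⁻ s in Set.Ioi (1:ℝ), F s < ∞ := by
      set ε : ℝ := (-1 - (a - b) * ℓ) / (2 * (b * ℓ)) with hε_def
      have hε : 0 < ε := by
        rw [hε_def]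
        apply div_pos (by linarith) (by positivity)
      clear_value ε
      set y : ℝ := ((ε - 1) * b + a) * ℓ with hy_def
      clear_value y
      have hy : y < -1 := by
        have hεb : ε * (b * ℓ) = (-1 - (a - b) * ℓ) / 2 := by
          rw [hε_def]; field_simp
        have hyy : y = (a - b) * ℓ + ε * (b * ℓ) := by rw [hy_def]; ring
        rw [hyy, hεb]; linarith
      set K₁ : ℝ := (1 + Real.exp 1) ^ ε / ε with hK₁_def
      have hK₁ : 0 < K₁ := by
        rw [hK₁_def]
        apply div_pos _ hε
        apply Real.rpow_pos_of_pos
        positivity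
      clear_value K₁
      set K : ℝ := (K₁ ^ b) ^ ℓ with hK_def
      clear_value K
      have hbound : ∀ s ∈ Set.Ioi (1:ℝ), F s ≤ ENNReal.ofReal (K * s ^ y) := by
        intro s hs
        have hs1 : 1 < s := hs
        have hs0 : 0 < s := by linarith
        have hlog_le : Real.log (Real.exp 1 + s) ≤ K₁ * s ^ ε := by
          have h1 : Real.log (Real.exp 1 + s) ≤ (Real.exp 1 + s) ^ ε / ε :=
            Real.log_le_rpow_div (by positivity) hε
          have h2 : (Real.exp 1 + s) ^ ε ≤ ((1 + Real.exp 1) * s) ^ ε := by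
            apply Real.rpow_le_rpow (by positivity) _ hε.le
            nlinarith [Real.exp_pos (1:ℝ)]
          have h3 : ((1 + Real.exp 1) * s) ^ ε = (1 + Real.exp 1) ^ ε * s ^ ε :=
            Real.mul_rpow (by positivity) hs0.le
          have h4 : (Real.exp 1 + s) ^ ε / ε ≤ ((1 + Real.exp 1) * s) ^ ε / ε :=
            (div_le_div_iff_of_pos_right hε).mpr h2
          rw [h3] at h4
          rw [hK₁_def]
          calc Real.log (Real.exp 1 + s) ≤ (Real.exp 1 + s) ^ ε / ε := h1
            _ ≤ (1 + Real.exp 1) ^ ε * s ^ ε / ε := h4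
            _ = (1 + Real.exp 1) ^ ε / ε * s ^ ε := by ring
        have hratio : Real.log (Real.exp 1 + s) / (1 + s) ≤ K₁ * s ^ (ε - 1) := by
          have hlognn : 0 ≤ Real.log (Real.exp 1 + s) := by
            apply Real.log_nonneg
            nlinarith [Real.add_one_le_exp (1:ℝ)]
          have h4 : Real.log (Real.exp 1 + s) / (1 + s) ≤ Real.log (Real.exp 1 + s) / s :=
            div_le_div_of_nonneg_left hlognn hs0 (by linarith)
          have h5 : Real.log (Real.exp 1 + s) / s ≤ K₁ * s ^ ε / s :=
            (div_le_div_iff_of_pos_right hs0).mpr hlog_le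
          have h6 : K₁ * s ^ ε / s = K₁ * s ^ (ε - 1) := by
            rw [Real.rpow_sub hs0, Real.rpow_one]; ring
          rw [h6] at h5
          linarith
        have hgs : g s ≤ K₁ ^ b * s ^ ((ε - 1) * b + a) := by
          have h7 : (Real.log (Real.exp 1 + s) / (1 + s)) ^ b ≤ (K₁ * s ^ (ε - 1)) ^ b :=
            Real.rpow_le_rpow (hlog_nonneg s hs0) hratio hb.le
          have h8 : (K₁ * s ^ (ε - 1)) ^ b = K₁ ^ b * s ^ ((ε - 1) * b) := by
            rw [Real.mul_rpow hK₁.le (Real.rpow_nonneg hs0.le _), ← Real.rpow_mul hs0.le]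
          have h9 : s ^ ((ε - 1) * b) * s ^ a = s ^ ((ε - 1) * b + a) :=
            (Real.rpow_add hs0 _ _).symm
          calc g s = (Real.log (Real.exp 1 + s) / (1 + s)) ^ b * s ^ a := hg_app s
            _ ≤ (K₁ * s ^ (ε - 1)) ^ b * s ^ a :=
                mul_le_mul_of_nonneg_right h7 (Real.rpow_nonneg hs0.le a)
            _ = K₁ ^ b * (s ^ ((ε - 1) * b) * s ^ a) := by rw [h8]; ring
            _ = K₁ ^ b * s ^ ((ε - 1) * b + a) := by rw [h9]
        have hgsl : g s ^ ℓ ≤ K * s ^ y := by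
          have h10 : g s ^ ℓ ≤ (K₁ ^ b * s ^ ((ε - 1) * b + a)) ^ ℓ :=
            Real.rpow_le_rpow (hg_nonneg s hs0) hgs hℓpos.le
          have h11 : (K₁ ^ b * s ^ ((ε - 1) * b + a)) ^ ℓ = K * s ^ y := by
            rw [Real.mul_rpow (Real.rpow_nonneg hK₁.le _) (Real.rpow_nonneg hs0.le _),
              ← Real.rpow_mul hs0.le, hK_def, hy_def]
          rw [h11] at h10
          exact h10
        calc F s = ENNReal.ofReal (g s ^ ℓ) := by
              rw [hF_app, ENNReal.ofReal_rpow_of_nonneg (hg_nonneg s hs0) hℓpos.le]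
          _ ≤ ENNReal.ofReal (K * s ^ y) := ENNReal.ofReal_le_ofReal hgsl
      calc ∫⁻ s in Set.Ioi (1:ℝ), F s
          ≤ ∫⁻ s in Set.Ioi (1:ℝ), ENNReal.ofReal (K * s ^ y) :=
            setLIntegral_mono' measurableSet_Ioi hbound
        _ < ∞ := by
            have hint : IntegrableOn (fun s : ℝ => K * s ^ y) (Set.Ioi 1) :=
              (integrableOn_Ioi_rpow_of_lt hy one_pos).const_mul K
            exact hint.lintegral_lt_top
    exact ENNReal.add_lt_top.mpr ⟨hA, hB⟩
  -- positivity of J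
  have hJ_pos : 0 < J := by
    set c0 : ℝ := (1 / 3) ^ b * 2 ^ a with hc0_def
    have hc0 : 0 < c0 := by
      rw [hc0_def]
      exact mul_pos (Real.rpow_pos_of_pos (by norm_num) b) (Real.rpow_pos_of_pos two_pos a)
    clear_value c0
    have hlow : ∀ s ∈ Set.Ioc (1:ℝ) 2, ENNReal.ofReal (c0 ^ ℓ) ≤ F s := by
      intro s hs
      have hs1 : 1 < s := hs.1
      have hs2 : s ≤ 2 := hs.2
      have hs0 : 0 < s := by linarith
      have hlog1 : 1 ≤ Real.log (Real.exp 1 + s) := by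
        calc (1:ℝ) = Real.log (Real.exp 1) := (Real.log_exp 1).symm
          _ ≤ Real.log (Real.exp 1 + s) := Real.log_le_log (Real.exp_pos 1) (by linarith)
      have hratio_low : (1:ℝ) / 3 ≤ Real.log (Real.exp 1 + s) / (1 + s) := by
        rw [le_div_iff₀ (by linarith : (0:ℝ) < 1 + s)]
        nlinarith
      have hta : (2:ℝ) ^ a ≤ s ^ a :=
        Real.rpow_le_rpow_of_nonpos hs0 hs2 ha_neg.le
      have hgc : c0 ≤ g s := by
        have h1 : ((1:ℝ) / 3) ^ b ≤ (Real.log (Real.exp 1 + s) / (1 + s)) ^ b :=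
          Real.rpow_le_rpow (by norm_num) hratio_low hb.le
        rw [hc0_def, hg_app]
        exact mul_le_mul h1 hta (Real.rpow_nonneg (by norm_num) a)
          (Real.rpow_nonneg (hlog_nonneg s hs0) b)
      calc ENNReal.ofReal (c0 ^ ℓ) ≤ ENNReal.ofReal (g s ^ ℓ) :=
            ENNReal.ofReal_le_ofReal (Real.rpow_le_rpow hc0.le hgc hℓpos.le)
        _ = F s := by
            rw [hF_app, ENNReal.ofReal_rpow_of_nonneg (hg_nonneg s hs0) hℓpos.le]
    have hsub : Set.Ioc (1:ℝ) 2 ⊆ Set.Ioi 0 := fun s hs => lt_trans one_pos hs.1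
    have h1 : ∫⁻ s in Set.Ioc (1:ℝ) 2, F s ≤ J := by
      rw [hJ_def]; exact lintegral_mono_set hsub
    have h2 : ENNReal.ofReal (c0 ^ ℓ) * volume (Set.Ioc (1:ℝ) 2)
        ≤ ∫⁻ s in Set.Ioc (1:ℝ) 2, F s := by
      rw [← setLIntegral_const]
      exact setLIntegral_mono' measurableSet_Ioc hlow
    have hvol : volume (Set.Ioc (1:ℝ) 2) = 1 := by
      rw [Real.volume_Ioc]; norm_num
    have h3 : (0:ℝ≥0∞) < ENNReal.ofReal (c0 ^ ℓ) :=
      ENNReal.ofReal_pos.mpr (Real.rpow_pos_of_pos hc0 ℓ)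
    calc (0:ℝ≥0∞) < ENNReal.ofReal (c0 ^ ℓ) * volume (Set.Ioc (1:ℝ) 2) := by
          rw [hvol, mul_one]; exact h3
      _ ≤ J := le_trans h2 h1
  -- the constant
  set Cenn : ℝ≥0∞ := J ^ (1 / ℓ) with hCenn_def
  have hCenn_ne_top : Cenn ≠ ∞ := by
    rw [hCenn_def]
    exact (ENNReal.rpow_lt_top_of_nonneg (by positivity) hJ_fin.ne).ne
  have hCenn_ne_zero : Cenn ≠ 0 := by
    rw [hCenn_def]
    simp only [ne_eq, ENNReal.rpow_eq_zero_iff, not_or]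
    constructor
    · rintro ⟨hJ0, -⟩; exact absurd hJ0 hJ_pos.ne'
    · rintro ⟨hJtop, -⟩; exact absurd hJtop hJ_fin.ne
  clear_value Cenn
  refine ⟨Cenn.toReal, ENNReal.toReal_pos hCenn_ne_zero hCenn_ne_top, ?_⟩
  intro Ω hΩ
  have hc : 0 < |Ω| := abs_pos.mpr hΩ
  set c : ℝ := |Ω| with hc_def
  clear_value c
  -- main computation
  have hmain : (∫⁻ t in Set.Ioi (0:ℝ),
      (ENNReal.ofReal ((Real.log (Real.exp 1 + c * t) / (1 + c * t)) ^ b * t ^ a)) ^ ℓ) ^ (1 / ℓ)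
      = ENNReal.ofReal (Cenn.toReal * c ^ (1 / θ - 1 / 2 + (3 / 2) * (1 / r - 1 / p))) := by
    have hstep1 : ∫⁻ t in Set.Ioi (0:ℝ),
        (ENNReal.ofReal ((Real.log (Real.exp 1 + c * t) / (1 + c * t)) ^ b * t ^ a)) ^ ℓ
        = ENNReal.ofReal (c ^ (-(a * ℓ))) * ∫⁻ t in Set.Ioi (0:ℝ), F (c * t) := by
      have hm : Measurable fun t : ℝ => F (c * t) := hF_meas.comp (measurable_const_mul c)
      rw [← lintegral_const_mul _ hm]
      apply setLIntegral_congr_fun measurableSet_Ioi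
      intro t ht
      have ht0 : 0 < t := ht
      have hct : 0 < c * t := mul_pos hc ht0
      have hL : 0 ≤ Real.log (Real.exp 1 + c * t) / (1 + c * t) := hlog_nonneg _ hct
      have hreal : ((Real.log (Real.exp 1 + c * t) / (1 + c * t)) ^ b * t ^ a) ^ ℓ
          = c ^ (-(a * ℓ)) * (g (c * t)) ^ ℓ := by
        have e1 : g (c * t) = (Real.log (Real.exp 1 + c * t) / (1 + c * t)) ^ b
            * (c ^ a * t ^ a) := by
          rw [hg_app, Real.mul_rpow hc.le ht0.le]
        have e2 : (g (c * t)) ^ ℓ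
            = ((Real.log (Real.exp 1 + c * t) / (1 + c * t)) ^ b * t ^ a) ^ ℓ * c ^ (a * ℓ) := by
          rw [e1, show (Real.log (Real.exp 1 + c * t) / (1 + c * t)) ^ b * (c ^ a * t ^ a)
              = (Real.log (Real.exp 1 + c * t) / (1 + c * t)) ^ b * t ^ a * c ^ a by ring,
            Real.mul_rpow (mul_nonneg (Real.rpow_nonneg hL b) (Real.rpow_nonneg ht0.le a))
              (Real.rpow_nonneg hc.le a), ← Real.rpow_mul hc.le]
        rw [e2, ← mul_assoc, mul_comm (c ^ (-(a * ℓ))) _, mul_assoc,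
          ← Real.rpow_add hc, neg_add_cancel, Real.rpow_zero, mul_one]
      calc (ENNReal.ofReal ((Real.log (Real.exp 1 + c * t) / (1 + c * t)) ^ b * t ^ a)) ^ ℓ
          = ENNReal.ofReal (((Real.log (Real.exp 1 + c * t) / (1 + c * t)) ^ b * t ^ a) ^ ℓ) :=
            ENNReal.ofReal_rpow_of_nonneg
              (mul_nonneg (Real.rpow_nonneg hL b) (Real.rpow_nonneg ht0.le a)) hℓpos.le
        _ = ENNReal.ofReal (c ^ (-(a * ℓ)) * (g (c * t)) ^ ℓ) := by rw [hreal]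
        _ = ENNReal.ofReal (c ^ (-(a * ℓ))) * ENNReal.ofReal ((g (c * t)) ^ ℓ) :=
            ENNReal.ofReal_mul (Real.rpow_nonneg hc.le _)
        _ = ENNReal.ofReal (c ^ (-(a * ℓ))) * F (c * t) := by
            rw [hF_app, ENNReal.ofReal_rpow_of_nonneg (hg_nonneg _ hct) hℓpos.le]
    have hstep2 : ∫⁻ t in Set.Ioi (0:ℝ), F (c * t) = ENNReal.ofReal c⁻¹ * J := by
      rw [hJ_def]; exact my_lintegral_Ioi_comp_mul_left F hF_meas hc
    have hexp : (-(a * ℓ) - 1) * (1 / ℓ) = 1 / θ - 1 / 2 + (3 / 2) * (1 / r - 1 / p) := by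
      have h1 : (-(a * ℓ) - 1) * (1 / ℓ) = -a - 1 / ℓ := by field_simp
      rw [h1, hinvℓ, ha_def]; ring
    calc (∫⁻ t in Set.Ioi (0:ℝ),
        (ENNReal.ofReal ((Real.log (Real.exp 1 + c * t) / (1 + c * t)) ^ b * t ^ a)) ^ ℓ) ^ (1 / ℓ)
        = (ENNReal.ofReal (c ^ (-(a * ℓ))) * (ENNReal.ofReal c⁻¹ * J)) ^ (1 / ℓ) := by
          rw [hstep1, hstep2]
      _ = (ENNReal.ofReal (c ^ (-(a * ℓ) - 1)) * J) ^ (1 / ℓ) := by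
          have hcc : c ^ (-(a * ℓ)) * c⁻¹ = c ^ (-(a * ℓ) - 1) := by
            rw [Real.rpow_sub hc, Real.rpow_one, div_eq_mul_inv]
          rw [← mul_assoc, ← ENNReal.ofReal_mul (Real.rpow_nonneg hc.le _), hcc]
      _ = ENNReal.ofReal ((c ^ (-(a * ℓ) - 1)) ^ (1 / ℓ)) * Cenn := by
          rw [ENNReal.mul_rpow_of_nonneg _ _ (by positivity),
            ENNReal.ofReal_rpow_of_pos (Real.rpow_pos_of_pos hc _), hCenn_def]
      _ = ENNReal.ofReal (c ^ (1 / θ - 1 / 2 + (3 / 2) * (1 / r - 1 / p))) * Cenn := by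
          rw [← Real.rpow_mul hc.le, hexp]
      _ = ENNReal.ofReal (Cenn.toReal * c ^ (1 / θ - 1 / 2 + (3 / 2) * (1 / r - 1 / p))) := by
          rw [ENNReal.ofReal_mul ENNReal.toReal_nonneg, ENNReal.ofReal_toReal hCenn_ne_top,
            mul_comm]
  exact ⟨hmain, by rw [hmain]; exact ENNReal.ofReal_lt_top⟩


end
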